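/- Let π ∈ NC(n) and 1 ≤ p ≤ q ≤ n. Then the set [2p−1, 2q] ∩ ℤ is a union of blocks of the arch-diagram A(π) ∈ NCP(2n) if and only if the set [p,q] ∩ ℤ is a union of blocks of π. -/

import Mathlib

open scoped Classical

/-- A setoid (partition) of `Fin n` is non-crossing if there is no crossing
`a < b < c < d` with `a ∼ c`, `b ∼ d` but `a` and `b` in distinct blocks. -/
def IsNC {n : ℕ} (S : Setoid (Fin n)) : Prop :=
  ∀ a b c d : Fin n, a < b → b < c → c < d → S.r a c → S.r b d → S.r a b

/-- A partition is a pairing if every block has exactly two elements. -/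
def IsPairing {m : ℕ} (T : Setoid (Fin m)) : Prop :=
  ∀ x : Fin m, ∃ y : Fin m, y ≠ x ∧ T.r x y ∧ ∀ z : Fin m, T.r x z → z = x ∨ z = y

/-- The block of `i` in the partition `S`, as a finset. -/
noncomputable def blockOf {n : ℕ} (S : Setoid (Fin n)) (i : Fin n) : Finset (Fin n) :=
  Finset.univ.filter (fun j => S.r i j)

lemma blockOf_nonempty {n : ℕ} (S : Setoid (Fin n)) (i : Fin n) :
    (blockOf S i).Nonempty :=
  ⟨i, by simp [blockOf, S.iseqv.refl i]⟩

/-- The permutation `P_S` which performs an increasing cycle on every block of `S`: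
it sends `i` to the next larger element of its block, or to the minimum of the
block if `i` is the largest element of its block. -/
noncomputable def nextP {n : ℕ} (S : Setoid (Fin n)) (i : Fin n) : Fin n :=
  if h : ((blockOf S i).filter (fun j => i < j)).Nonempty
  then ((blockOf S i).filter (fun j => i < j)).min' h
  else (blockOf S i).min' (blockOf_nonempty S i)

/-- The inverse permutation `P_S⁻¹` (decreasing cycle on every block of `S`). -/
noncomputable def prevP {n : ℕ} (S : Setoid (Fin n)) (i : Fin n) : Fin n :=
  if h : ((blockOf S i).filter (fun j => j < i)).Nonempty
  then ((blockOf S i).filter (fun j => j < i)).max' h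
  else (blockOf S i).max' (blockOf_nonempty S i)

/-- `0`-indexed version of the point `2i-1` of `{1,…,2n}`. -/
def dEven {n : ℕ} (j : Fin n) : Fin (2*n) := ⟨2*j.val, by have := j.isLt; omega⟩

/-- `0`-indexed version of the point `2i` of `{1,…,2n}`. -/
def dOdd {n : ℕ} (j : Fin n) : Fin (2*n) := ⟨2*j.val+1, by have := j.isLt; omega⟩

/-- The doubling construction `π ↦ A(π)`: the pairing of `{1,…,2n}` generated by
pairing each point `2i` with `2P_π(i) - 1`, so that the associated permutation
satisfies `P_{A(π)}(2i) = 2P_π(i) - 1` and `P_{A(π)}(2i-1) = 2P_π⁻¹(i)`. -/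
noncomputable def archSetoid {n : ℕ} (S : Setoid (Fin n)) : Setoid (Fin (2*n)) :=
  Relation.EqvGen.setoid (fun a b => ∃ j : Fin n, a = dOdd j ∧ b = dEven (nextP S j))

/-- The meandric system permutation `M_{π,ρ} ∈ S_{2n}`, defined by
`M_{π,ρ}(2i-1) = 2P_π⁻¹(i)` and `M_{π,ρ}(2i) = 2P_ρ(i) - 1` (here `0`-indexed). -/
noncomputable def meanderMap {n : ℕ} (π ρ : Setoid (Fin n)) (x : Fin (2*n)) : Fin (2*n) :=
  if x.val % 2 = 0
  then dOdd (prevP π ⟨x.val / 2, by have := x.isLt; omega⟩)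
  else dEven (nextP ρ ⟨x.val / 2, by have := x.isLt; omega⟩)

/-- The orbit partition of a map. -/
def orbitSetoid {m : ℕ} (f : Fin m → Fin m) : Setoid (Fin m) :=
  Relation.EqvGen.setoid (fun a b => f a = b)

/-- Number of orbits of a map. -/
noncomputable def numOrbits {m : ℕ} (f : Fin m → Fin m) : ℕ :=
  Nat.card (Quotient (orbitSetoid f))

/-- `S` is a union of blocks of the partition `T`. -/
def IsBlockUnion {m : ℕ} (T : Setoid (Fin m)) (S : Set (Fin m)) : Prop :=
  ∀ x ∈ S, ∀ y, T.r x y → y ∈ S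

/-- `S` is invariant under `f`. -/
def MInvariant {m : ℕ} (f : Fin m → Fin m) (S : Set (Fin m)) : Prop :=
  ∀ x ∈ S, f x ∈ S

/-- The meandric system `M_{π,ρ}` is reducible: some proper subinterval
`{a,…,b}` of `{1,…,2n}` is invariant under `M_{π,ρ}`. -/
noncomputable def Reducible {n : ℕ} (π ρ : Setoid (Fin n)) : Prop :=
  ∃ a b : Fin (2*n), a ≤ b ∧ b.val - a.val < 2*n - 1 ∧
    MInvariant (meanderMap π ρ) {x | a ≤ x ∧ x ≤ b}

/-- The join in the lattice of non-crossing partitions: the smallest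
non-crossing partition above both `π` and `ρ`. -/
noncomputable def ncJoin {m : ℕ} (π ρ : Setoid (Fin m)) : Setoid (Fin m) :=
  sInf {τ | IsNC τ ∧ π ≤ τ ∧ ρ ≤ τ}

/-- The moment-cumulant formula of free probability: `mom n` is the sum over all
non-crossing partitions of `{1,…,n}` of the products of cumulants `κ` indexed
by the block sizes.  This uniquely determines the free cumulants `κ n`, `n ≥ 1`,
of a sequence of moments. -/
def MomCum {F : Type*} [Field F] (mom κ : ℕ → F) : Prop :=
  ∀ n : ℕ, 0 < n →
    mom n = ∑ᶠ S ∈ {S : Setoid (Fin n) | IsNC S}, ∏ᶠ B ∈ Setoid.classes S, κ B.ncard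

/-- The number of irreducible meandric systems on `2k` bridges, described as the
number of pairs `(π,ρ) ∈ NC(k)²` with `π ∨ ρ = 1_k`, `π ∧ ρ = 0_k`. -/
noncomputable def mirr (k : ℕ) : ℕ :=
  Nat.card {pr : Setoid (Fin k) × Setoid (Fin k) //
    IsNC pr.1 ∧ IsNC pr.2 ∧ ncJoin pr.1 pr.2 = ⊤ ∧ pr.1 ⊓ pr.2 = ⊥}

/-- The number of pairs `(π,ρ) ∈ NC(n)²` whose meandric system `M_{π,ρ}` has
exactly `k` orbits (connected components). -/
noncomputable def mcount (n k : ℕ) : ℕ :=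
  Nat.card {pr : Setoid (Fin n) × Setoid (Fin n) //
    IsNC pr.1 ∧ IsNC pr.2 ∧ numOrbits (meanderMap pr.1 pr.2) = k}

/-- The number of meanders on `2n` bridges. -/
noncomputable def meanderNum (n : ℕ) : ℕ := mcount n 1


/-!
A set is a union of blocks of `S` iff it is closed under the cycle `P_S`, since iterating `P_S`
from any point runs through its whole block. The relation generating `A(π)` joins `2i` to
`2P_π(i) - 1`, two points lying over `i` and `P_π(i)` under `x ↦ ⌈x/2⌉`. So the preimage of
any `B ⊆ {1,…,n}` under this map, in particular `[2p-1, 2q]` for `B = [p, q]`, is a union of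
blocks of `A(π)` iff `B` is closed under `P_π`.
-/

section NextP

variable {n : ℕ} (S : Setoid (Fin n))

@[simp] lemma mem_blockOf {i j : Fin n} : j ∈ blockOf S i ↔ S.r i j := by simp [blockOf]

lemma rel_nextP (i : Fin n) : S.r i (nextP S i) := by
  rw [← mem_blockOf]
  unfold nextP
  split
  · next h => exact Finset.mem_of_mem_filter _ (Finset.min'_mem _ h)
  · exact Finset.min'_mem _ _

variable {S}

lemma lt_nextP_le_of_rel {x y : Fin n} (hr : S.r x y) (hlt : x < y) :
    x < nextP S x ∧ nextP S x ≤ y := by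
  have hy : y ∈ (blockOf S x).filter (x < ·) := by simp [hr, hlt]
  have hne : ((blockOf S x).filter (x < ·)).Nonempty := ⟨y, hy⟩
  have hnext : nextP S x = ((blockOf S x).filter (x < ·)).min' hne := by
    unfold nextP; rw [dif_pos hne]
  rw [hnext]
  exact ⟨(Finset.mem_filter.1 (Finset.min'_mem _ hne)).2, Finset.min'_le _ _ hy⟩

/-- At the largest element of a block, `P_S` wraps around to the smallest one. -/
lemma nextP_le_of_forall_rel_le {i y : Fin n} (hmax : ∀ j, S.r i j → j ≤ i) (hy : S.r i y) :
    nextP S i ≤ y := by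
  have hempty : ¬ ((blockOf S i).filter (i < ·)).Nonempty := by
    rintro ⟨j, hj⟩
    rw [Finset.mem_filter, mem_blockOf] at hj
    exact (hmax j hj.1).not_gt hj.2
  unfold nextP
  rw [dif_neg hempty]
  exact Finset.min'_le _ _ ((mem_blockOf S).2 hy)

variable {A : Set (Fin n)}

lemma mem_of_rel_of_le (hA : ∀ x ∈ A, nextP S x ∈ A) {x y : Fin n} (hr : S.r x y)
    (hxy : x ≤ y) (hx : x ∈ A) : y ∈ A := by
  induction x using WellFoundedGT.induction with
  | _ x ih =>
    rcases hxy.eq_or_lt with rfl | hlt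
    · exact hx
    · obtain ⟨hx_lt, hle⟩ := lt_nextP_le_of_rel hr hlt
      exact ih _ hx_lt (S.trans (S.symm (rel_nextP S x)) hr) hle (hA x hx)

/-- Climb from `x` to the top `M` of its block, wrap around to the bottom `P_S(M)`, and climb
from there to `y`. -/
lemma mem_of_rel_of_forall_nextP_mem (hA : ∀ x ∈ A, nextP S x ∈ A) {x y : Fin n}
    (hr : S.r x y) (hx : x ∈ A) : y ∈ A := by
  have hself : x ∈ blockOf S x := (mem_blockOf S).2 (S.refl x)
  set M := (blockOf S x).max' ⟨x, hself⟩
  have hxM : S.r x M := (mem_blockOf S).1 (Finset.max'_mem _ _)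
  have hMmax : ∀ j, S.r M j → j ≤ M := fun j hj =>
    Finset.le_max' _ j ((mem_blockOf S).2 (S.trans hxM hj))
  have hMA : M ∈ A := mem_of_rel_of_le hA hxM (Finset.le_max' _ x hself) hx
  have hMy : S.r M y := S.trans (S.symm hxM) hr
  exact mem_of_rel_of_le hA (S.trans (S.symm (rel_nextP S M)) hMy)
    (nextP_le_of_forall_rel_le hMmax hMy) (hA M hMA)

lemma isBlockUnion_iff_forall_mem_iff_nextP_mem :
    IsBlockUnion S A ↔ ∀ x, x ∈ A ↔ nextP S x ∈ A :=
  ⟨fun hA x => ⟨fun hx => hA x hx _ (rel_nextP S x),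
      fun hx => hA _ hx x (S.symm (rel_nextP S x))⟩,
    fun hA _ hx _ hr => mem_of_rel_of_forall_nextP_mem (fun x => (hA x).1) hr hx⟩

end NextP

lemma isBlockUnion_eqvGen_setoid_iff {m : ℕ} {r : Fin m → Fin m → Prop}
    {A : Set (Fin m)} :
    IsBlockUnion (Relation.EqvGen.setoid r) A ↔ ∀ a b, r a b → (a ∈ A ↔ b ∈ A) := by
  refine ⟨fun hA a b hr => ⟨fun ha => hA a ha b (.rel a b hr),
    fun hb => hA b hb a (.symm _ _ (.rel a b hr))⟩, fun hA a ha b hr => ?_⟩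
  suffices h : ∀ a b, Relation.EqvGen r a b → (a ∈ A ↔ b ∈ A) from (h a b hr).1 ha
  intro a b h
  induction h with
  | rel a b h => exact hA a b h
  | refl => exact .rfl
  | symm _ _ _ ih => exact ih.symm
  | trans _ _ _ _ _ ih₁ ih₂ => exact ih₁.trans ih₂

/-- The 0-indexed form of `x ↦ ⌈x/2⌉`, sending both `2i-1` and `2i` to `i`. -/
def halfIdx {n : ℕ} (x : Fin (2 * n)) : Fin n := ⟨x.val / 2, by omega⟩

@[simp] lemma halfIdx_dOdd {n : ℕ} (j : Fin n) : halfIdx (dOdd j) = j := by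
  ext; simp [halfIdx, dOdd]; omega

@[simp] lemma halfIdx_dEven {n : ℕ} (j : Fin n) : halfIdx (dEven j) = j := by
  ext; simp [halfIdx, dEven]

theorem isBlockUnion_archSetoid_preimage_iff {n : ℕ} (S : Setoid (Fin n)) (B : Set (Fin n)) :
    IsBlockUnion (archSetoid S) (halfIdx ⁻¹' B) ↔ IsBlockUnion S B := by
  rw [archSetoid, isBlockUnion_eqvGen_setoid_iff, isBlockUnion_iff_forall_mem_iff_nextP_mem]
  constructor
  · exact fun h j => by simpa using h _ _ ⟨j, rfl, rfl⟩
  · rintro h _ _ ⟨j, rfl, rfl⟩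
    simpa using h j

theorem interval_blockUnion_arch_iff_general (n : ℕ) (S : Setoid (Fin n))
    (p q : Fin n) :
    IsBlockUnion (archSetoid S)
        {x : Fin (2*n) | 2*p.val ≤ x.val ∧ x.val ≤ 2*q.val + 1}
      ↔ IsBlockUnion S {x : Fin n | p.val ≤ x.val ∧ x.val ≤ q.val} := by
  have hinterval : {x : Fin (2*n) | 2*p.val ≤ x.val ∧ x.val ≤ 2*q.val + 1} =
      halfIdx ⁻¹' {x : Fin n | p.val ≤ x.val ∧ x.val ≤ q.val} := by
    ext x
    simp only [Set.mem_ofPred_eq, Set.mem_preimage, halfIdx]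
    omega
  rw [hinterval]
  exact isBlockUnion_archSetoid_preimage_iff S _

/-- For `π ∈ NC(n)` and `1 ≤ p ≤ q ≤ n` (here `0`-indexed): the interval
`[2p-1, 2q] ∩ ℤ` is a union of blocks of `A(π)` iff `[p,q] ∩ ℤ` is a union of
blocks of `π`. -/
theorem interval_blockUnion_arch_iff (n : ℕ) (S : Setoid (Fin n)) (hS : IsNC S)
    (p q : Fin n) (hpq : p ≤ q) :
    IsBlockUnion (archSetoid S)
        {x : Fin (2*n) | 2*p.val ≤ x.val ∧ x.val ≤ 2*q.val + 1}
      ↔ IsBlockUnion S {x : Fin n | p.val ≤ x.val ∧ x.val ≤ q.val} :=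
  interval_blockUnion_arch_iff_general n S p q
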